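/- arXiv:1509.04955 — 2 statements merged into one kernel-verified Lean document; each statement's English description precedes it below -/
import Mathlib

section
/- Let K be a positive integer, ε ∈ (0,1), and S, T ≥ 2 positive integers with T ≤ εS. For any function u ∈ 𝓕_S^K (a product of K functions in 𝓕_S), there is a function v ∈ 𝓕_T satisfying ‖v − u‖_∞ = O(Kε). -/
/-- The box [S]^k ⊆ ℤ^k. -/
noncomputable def sbox (k S : ℕ) : Finset (Fin k → ℤ) :=
  Fintype.piFinset fun _ => Finset.Icc (1 : ℤ) (S : ℤ)

/-- ψ(s₁,…,s_k) = k!(s₁ + ⋯ + s_k). -/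
def psiK (k : ℕ) (s : Fin k → ℤ) : ℤ := (Nat.factorial k : ℤ) * ∑ i, s i

/-- The basic functions of 𝓕_S: u(n) = E_{s∈[S]^k} ∏ᵢ uᵢ(n − ψ(s), s) with
uᵢ : G^{k+1} → [−1,1] not depending on sᵢ. -/
def FSbasic (N : ℕ) [NeZero N] (k S : ℕ) : Set (ZMod N → ℝ) :=
  {u | ∃ w : Fin k → ZMod N → (Fin k → ZMod N) → ℝ,
    (∀ i n s, |w i n s| ≤ 1) ∧
    (∀ i n s s', (∀ j, j ≠ i → s j = s' j) → w i n s = w i n s') ∧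
    (∀ n, u n = (∑ s ∈ sbox k S,
        ∏ i, w i (n - ((psiK k s : ℤ) : ZMod N)) fun j => ((s j : ℤ) : ZMod N))
      / (S : ℝ) ^ k)}

/-- 𝓕_S: all convex combinations of basic functions. -/
def FSset (N : ℕ) [NeZero N] (k S : ℕ) : Set (ZMod N → ℝ) :=
  convexHull ℝ (FSbasic N k S)

/-!
Write a basic function as `b n = 𝔼_{s ∈ [S]^k} F s` with `F s = ∏ᵢ wᵢ (n - ψ s, s)`. Translating
the box `[S]^k` by `t ∈ [T]^k` moves only a `1 - (1 - T/S)^k ≤ kT/S` fraction of it, so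
`∏ⱼ bⱼ n` is within `2kKT/S` of `𝔼_{t ∈ [T]^k} ∏ⱼ 𝔼_s Fⱼ (s + t)`. Expanding the product over
`σ ∈ ([S]^k)^K` and using `ψ (σⱼ + t) = ψ σⱼ + ψ t`, this is the average over `σ` of basic
functions of `𝓕_T` with weights `Wᵢ (m, τ) = ∏ⱼ wⱼᵢ (m - ψ σⱼ, σⱼ + τ)`, which still ignore `τᵢ`.
Finally, the product is multilinear and the uniform `c`-neighbourhood of the convex set `𝓕_T` is
convex, so the estimate passes from basic functions to their convex combinations.
-/

open Finset
open scoped BigOperators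

section Generic

variable {ι R : Type*}

lemma abs_prod_sub_prod_le_sum_abs_sub [CommRing R] [LinearOrder R] [IsStrictOrderedRing R]
    (s : Finset ι) {f g : ι → R} (hf : ∀ i ∈ s, |f i| ≤ 1) (hg : ∀ i ∈ s, |g i| ≤ 1) :
    |∏ i ∈ s, f i - ∏ i ∈ s, g i| ≤ ∑ i ∈ s, |f i - g i| := by
  induction s using Finset.cons_induction with
  | empty => simp
  | cons a s ha ih =>
    rw [forall_mem_cons] at hf hg
    have hgs : |∏ i ∈ s, g i| ≤ 1 := by
      rw [abs_prod]; exact prod_le_one (fun _ _ => abs_nonneg _) hg.2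
    rw [prod_cons, prod_cons, sum_cons]
    calc |f a * ∏ i ∈ s, f i - g a * ∏ i ∈ s, g i|
        = |f a * (∏ i ∈ s, f i - ∏ i ∈ s, g i) + (f a - g a) * ∏ i ∈ s, g i| := by ring_nf
      _ ≤ |f a| * |∏ i ∈ s, f i - ∏ i ∈ s, g i| + |f a - g a| * |∏ i ∈ s, g i| := by
        rw [← abs_mul, ← abs_mul]; exact abs_add_le _ _
      _ ≤ 1 * ∑ i ∈ s, |f i - g i| + |f a - g a| * 1 := by
        gcongr
        · exact hf.1
        · exact ih hf.2 hg.2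
      _ = |f a - g a| + ∑ i ∈ s, |f i - g i| := by ring

lemma abs_sum_sub_sum_le_card_sdiff_add_card_sdiff [DecidableEq ι] {s t : Finset ι} {f : ι → ℝ}
    (hf : ∀ i, |f i| ≤ 1) : |∑ i ∈ s, f i - ∑ i ∈ t, f i| ≤ #(s \ t) + #(t \ s) := by
  have key (u : Finset ι) : |∑ i ∈ u, f i| ≤ #u := by
    simpa using (abs_sum_le_sum_abs _ _).trans (sum_le_card_nsmul u _ 1 fun i _ => hf i)
  rw [← sum_sdiff_sub_sum_sdiff]
  exact (abs_sub _ _).trans (add_le_add (key _) (key _))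

lemma abs_expect_sub_le {s : Finset ι} (hs : s.Nonempty) {f : ι → ℝ} {c δ : ℝ}
    (h : ∀ i ∈ s, |f i - c| ≤ δ) : |𝔼 i ∈ s, f i - c| ≤ δ := by
  rw [← expect_const hs c, ← expect_sub_distrib]
  exact (abs_expect_le _ _).trans (expect_le hs h)

lemma abs_expect_le_one {s : Finset ι} {f : ι → ℝ} (h : ∀ i ∈ s, |f i| ≤ 1) :
    |𝔼 i ∈ s, f i| ≤ 1 := by
  rcases s.eq_empty_or_nonempty with rfl | hs
  · simp
  · exact (abs_expect_le _ _).trans (expect_le hs h)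

lemma prod_univ_expect [Fintype ι] [DecidableEq ι] {κ : ι → Type*} (t : ∀ i, Finset (κ i))
    (f : ∀ i, κ i → ℝ) : ∏ i, 𝔼 x ∈ t i, f i x = 𝔼 x ∈ Fintype.piFinset t, ∏ i, f i (x i) := by
  simp only [expect_eq_sum_div_card, prod_div_distrib, prod_univ_sum, Fintype.card_piFinset,
    Nat.cast_prod]

end Generic

section Convexity

variable {ι α : Type*}

def supNhd (C : Set (α → ℝ)) (c : ℝ) : Set (α → ℝ) :=
  {u | ∃ v ∈ C, ∀ n, |v n - u n| ≤ c}

lemma Convex.supNhd {C : Set (α → ℝ)} (hC : Convex ℝ C) (c : ℝ) : Convex ℝ (supNhd C c) := by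
  rintro u₁ ⟨v₁, hv₁, h₁⟩ u₂ ⟨v₂, hv₂, h₂⟩ a b ha hb hab
  refine ⟨a • v₁ + b • v₂, hC hv₁ hv₂ ha hb hab, fun n => ?_⟩
  calc |(a • v₁ + b • v₂) n - (a • u₁ + b • u₂) n|
      = |a * (v₁ n - u₁ n) + b * (v₂ n - u₂ n)| := by
        simp only [Pi.add_apply, Pi.smul_apply, smul_eq_mul]; ring_nf
    _ ≤ a * |v₁ n - u₁ n| + b * |v₂ n - u₂ n| := by
      refine (abs_add_le _ _).trans_eq ?_
      rw [abs_mul, abs_mul, abs_of_nonneg ha, abs_of_nonneg hb]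
    _ ≤ a * c + b * c := by gcongr <;> simp [h₁, h₂]
    _ = c := by rw [← add_mul, hab, one_mul]

lemma expect_mem_convexHull {s : Finset ι} (hs : s.Nonempty) {B : Set (α → ℝ)}
    {f : ι → α → ℝ} (hf : ∀ i ∈ s, f i ∈ B) : (fun n => 𝔼 i ∈ s, f i n) ∈ convexHull ℝ B := by
  convert s.centerMass_mem_convexHull (w := fun _ => (1 : ℝ)) (fun _ _ => zero_le_one)
    (by rw [sum_const, nsmul_one]; exact_mod_cast hs.card_pos) hf using 1
  ext n
  simp [centerMass, expect_eq_sum_div_card, Finset.sum_apply, div_eq_inv_mul]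

lemma MultilinearMap.map_mem_of_forall_mem_convexHull [Fintype ι] [DecidableEq ι]
    {M P : Type*} [AddCommGroup M] [Module ℝ M] [AddCommGroup P] [Module ℝ P]
    (f : MultilinearMap ℝ (fun _ : ι => M) P) {B : Set M} {D : Set P} (hD : Convex ℝ D)
    (hB : ∀ g : ι → M, (∀ i, g i ∈ B) → f g ∈ D) {g : ι → M}
    (hg : ∀ i, g i ∈ convexHull ℝ B) : f g ∈ D := by
  suffices ∀ s : Finset ι, ∀ g : ι → M, (∀ i ∈ s, g i ∈ convexHull ℝ B) →
      (∀ i ∉ s, g i ∈ B) → f g ∈ D from this univ g (fun i _ => hg i) (by simp)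
  intro s
  induction s using Finset.induction_on with
  | empty => exact fun g _ hg => hB g fun i => hg i (notMem_empty i)
  | insert a s ha ih =>
    intro g hhull hB'
    have himage : f.toLinearMap g a '' B ⊆ D := by
      rintro _ ⟨x, hx, rfl⟩
      refine ih _ (fun i hi => ?_) (fun i hi => ?_)
      · rw [Function.update_of_ne (ne_of_mem_of_not_mem hi ha)]
        exact hhull i (mem_insert_of_mem hi)
      · rcases eq_or_ne i a with rfl | hia
        · simpa using hx
        · rw [Function.update_of_ne hia]
          exact hB' i (by simp [hia, hi])
    have := Set.mem_image_of_mem (f.toLinearMap g a) (hhull a (mem_insert_self a s))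
    rw [LinearMap.image_convexHull] at this
    simpa using convexHull_min himage hD this

end Convexity

lemma card_sbox (k S : ℕ) : #(sbox k S) = S ^ k := by
  simp [sbox, Fintype.card_piFinset, Int.card_Icc]

lemma sbox_nonempty (k : ℕ) {S : ℕ} (hS : 0 < S) : (sbox k S).Nonempty := by
  rw [← card_pos, card_sbox]; positivity

lemma pow_sub_le_card_sbox_inter_map {k S T : ℕ} (hTS : T ≤ S) {t : Fin k → ℤ}
    (ht : t ∈ sbox k T) :
    (S - T) ^ k ≤ #(sbox k S ∩ (sbox k S).map (addRightEmbedding t)) := by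
  simp only [sbox, Fintype.mem_piFinset, mem_Icc] at ht
  have hsub : (Fintype.piFinset fun i => Icc (1 + t i) (S : ℤ)) ⊆
      sbox k S ∩ (sbox k S).map (addRightEmbedding t) := by
    intro s hs
    simp only [Fintype.mem_piFinset, mem_Icc] at hs
    refine mem_inter.2 ⟨?_, mem_map.2 ⟨s - t, ?_, by simp⟩⟩ <;>
      simp only [sbox, Fintype.mem_piFinset, mem_Icc, Pi.sub_apply] <;>
      intro i <;> have := hs i <;> have := ht i <;> omega
  refine le_trans ?_ (card_le_card hsub)
  rw [Fintype.card_piFinset, ← Fin.prod_const]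
  gcongr with i
  have := ht i
  rw [Int.card_Icc]
  omega

lemma abs_expect_sbox_add_sub_le {k S T : ℕ} (hT : 0 < T) (hTS : T ≤ S) {t : Fin k → ℤ}
    (ht : t ∈ sbox k T) {h : (Fin k → ℤ) → ℝ} (hh : ∀ s, |h s| ≤ 1) :
    |𝔼 s ∈ sbox k S, h (s + t) - 𝔼 s ∈ sbox k S, h s| ≤ 2 * k * T / S := by
  classical
  set B := sbox k S
  set B' := B.map (addRightEmbedding t)
  have hS : (0 : ℝ) < S := by exact_mod_cast hT.trans_le hTS
  have hB : (#B : ℝ) = S ^ k := by rw [card_sbox]; push_cast; rfl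
  have hsdiff (U V : Finset (Fin k → ℤ)) : (#(U \ V) : ℝ) = #U - #(U ∩ V) := by
    rw [eq_sub_iff_add_eq]; exact_mod_cast card_sdiff_add_card_inter U V
  have hinter : ((S : ℝ) - T) ^ k ≤ #(B ∩ B') := by
    have := pow_sub_le_card_sbox_inter_map hTS ht
    rwa [← Nat.cast_le (α := ℝ), Nat.cast_pow, Nat.cast_sub hTS] at this
  have bernoulli : 1 - k * (T / S : ℝ) ≤ (1 - T / S) ^ k := by
    have hTS' : (T / S : ℝ) ≤ 1 := div_le_one_of_le₀ (by exact_mod_cast hTS) hS.le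
    simpa [← sub_eq_add_neg] using one_add_mul_le_pow (a := -(T / S : ℝ)) (by linarith) k
  have hpow : ((S : ℝ) - T) ^ k = S ^ k * (1 - T / S) ^ k := by
    rw [← mul_pow]; congr 1; field_simp
  calc |𝔼 s ∈ B, h (s + t) - 𝔼 s ∈ B, h s|
      = |∑ s ∈ B', h s - ∑ s ∈ B, h s| / S ^ k := by
        rw [expect_eq_sum_div_card, expect_eq_sum_div_card, hB, ← sub_div, abs_div,
          abs_of_pos (pow_pos hS k), sum_map]
        rfl
    _ ≤ (#(B' \ B) + #(B \ B')) / S ^ k := by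
        gcongr; exact abs_sum_sub_sum_le_card_sdiff_add_card_sdiff hh
    _ ≤ 2 * (S ^ k - S ^ k * (1 - T / S) ^ k) / S ^ k := by
        rw [hsdiff, hsdiff, card_map, hB, inter_comm, ← hpow]; gcongr; linarith
    _ ≤ 2 * (S ^ k - S ^ k * (1 - k * (T / S))) / S ^ k := by gcongr
    _ = 2 * k * T / S := by field_simp; ring

section FS

variable {N k : ℕ}

def FSsummand (w : Fin k → ZMod N → (Fin k → ZMod N) → ℝ) (n : ZMod N) (s : Fin k → ℤ) : ℝ :=
  ∏ i, w i (n - ((psiK k s : ℤ) : ZMod N)) fun j => ((s j : ℤ) : ZMod N)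

def IsFSWeight (w : Fin k → ZMod N → (Fin k → ZMod N) → ℝ) : Prop :=
  (∀ i n s, |w i n s| ≤ 1) ∧ ∀ i n s s', (∀ j, j ≠ i → s j = s' j) → w i n s = w i n s'

lemma mem_FSbasic_iff [NeZero N] {S : ℕ} {u : ZMod N → ℝ} :
    u ∈ FSbasic N k S ↔
      ∃ w, IsFSWeight w ∧ ∀ n, u n = 𝔼 s ∈ sbox k S, FSsummand w n s := by
  simp only [FSbasic, IsFSWeight, FSsummand, expect_eq_sum_div_card, card_sbox,
    Nat.cast_pow, and_assoc]
  rfl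

lemma IsFSWeight.abs_FSsummand_le_one {w : Fin k → ZMod N → (Fin k → ZMod N) → ℝ}
    (hw : IsFSWeight w) (n : ZMod N) (s : Fin k → ℤ) : |FSsummand w n s| ≤ 1 := by
  rw [FSsummand, abs_prod]
  exact prod_le_one (fun _ _ => abs_nonneg _) fun i _ => hw.1 _ _ _

lemma psiK_add (s t : Fin k → ℤ) : psiK k (s + t) = psiK k s + psiK k t := by
  simp [psiK, sum_add_distrib, mul_add]

variable {K : ℕ}

def prodWeight (w : Fin K → Fin k → ZMod N → (Fin k → ZMod N) → ℝ) (σ : Fin K → Fin k → ℤ) :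
    Fin k → ZMod N → (Fin k → ZMod N) → ℝ :=
  fun i m τ => ∏ j, w j i (m - ((psiK k (σ j) : ℤ) : ZMod N)) fun l => ((σ j l : ℤ) : ZMod N) + τ l

lemma isFSWeight_prodWeight {w : Fin K → Fin k → ZMod N → (Fin k → ZMod N) → ℝ}
    (hw : ∀ j, IsFSWeight (w j)) (σ : Fin K → Fin k → ℤ) : IsFSWeight (prodWeight w σ) := by
  refine ⟨fun i m τ => ?_, fun i m τ τ' hττ' => ?_⟩
  · rw [prodWeight, abs_prod]
    exact prod_le_one (fun _ _ => abs_nonneg _) fun j _ => (hw j).1 _ _ _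
  · exact prod_congr rfl fun j _ => (hw j).2 _ _ _ _ fun l hl => by rw [hττ' l hl]

lemma FSsummand_prodWeight (w : Fin K → Fin k → ZMod N → (Fin k → ZMod N) → ℝ)
    (σ : Fin K → Fin k → ℤ) (n : ZMod N) (t : Fin k → ℤ) :
    FSsummand (prodWeight w σ) n t = ∏ j, FSsummand (w j) n (σ j + t) := by
  simp only [FSsummand, prodWeight, psiK_add, Pi.add_apply]
  rw [prod_comm]
  push_cast
  ring_nf

end FS

theorem exists_mem_FSset_abs_sub_prod_le {N k K S T : ℕ} [NeZero N] (hT : 0 < T) (hTS : T ≤ S)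
    {b : Fin K → ZMod N → ℝ} (hb : ∀ j, b j ∈ FSbasic N k S) :
    ∃ v ∈ FSset N k T, ∀ n, |v n - ∏ j, b j n| ≤ K * (2 * k * T / S) := by
  choose w hw hbw using fun j => mem_FSbasic_iff.1 (hb j)
  set P := Fintype.piFinset fun _ : Fin K => sbox k S
  have hP : P.Nonempty := Fintype.piFinset_nonempty.2 fun _ => sbox_nonempty k (hT.trans_le hTS)
  refine ⟨fun n => 𝔼 σ ∈ P, 𝔼 t ∈ sbox k T, FSsummand (prodWeight w σ) n t,
    expect_mem_convexHull hP fun σ _ =>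
      mem_FSbasic_iff.2 ⟨_, isFSWeight_prodWeight hw σ, fun _ => rfl⟩,
    fun n => ?_⟩
  have hv : 𝔼 σ ∈ P, 𝔼 t ∈ sbox k T, FSsummand (prodWeight w σ) n t =
      𝔼 t ∈ sbox k T, ∏ j, 𝔼 s ∈ sbox k S, FSsummand (w j) n (s + t) := by
    simp_rw [expect_comm P, FSsummand_prodWeight, prod_univ_expect]
    rfl
  simp only [hv, hbw]
  refine abs_expect_sub_le (sbox_nonempty k hT) fun t ht => ?_
  have hbounded (j : Fin K) (t' : Fin k → ℤ) :
      |𝔼 s ∈ sbox k S, FSsummand (w j) n (s + t')| ≤ 1 :=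
    abs_expect_le_one fun s _ => (hw j).abs_FSsummand_le_one _ _
  calc |∏ j, 𝔼 s ∈ sbox k S, FSsummand (w j) n (s + t) - ∏ j, 𝔼 s ∈ sbox k S, FSsummand (w j) n s|
      ≤ ∑ j, |𝔼 s ∈ sbox k S, FSsummand (w j) n (s + t) - 𝔼 s ∈ sbox k S, FSsummand (w j) n s| :=
        abs_prod_sub_prod_le_sum_abs_sub _ (fun j _ => hbounded j t)
          (fun j _ => by simpa using hbounded j 0)
    _ ≤ ∑ _j : Fin K, (2 * k * T / S : ℝ) := sum_le_sum fun j _ =>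
        abs_expect_sbox_add_sub_le hT hTS ht ((hw j).abs_FSsummand_le_one n)
    _ = K * (2 * k * T / S) := by simp

/-- 𝓕_S is almost closed under products: for T ≤ εS, any product of K functions of
𝓕_S is within O(Kε) in sup norm of a function of 𝓕_T. -/
theorem stmt15 (k : ℕ) (hk : 2 ≤ k) :
    ∃ C : ℝ, 0 < C ∧ ∀ (N : ℕ) [NeZero N], ∀ K : ℕ, 0 < K → ∀ ε : ℝ, 0 < ε → ε < 1 →
    ∀ S T : ℕ, 2 ≤ S → 2 ≤ T → (T : ℝ) ≤ ε * S →
    ∀ u : ZMod N → ℝ,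
      (∃ g : Fin K → (ZMod N → ℝ), (∀ j, g j ∈ FSset N k S) ∧ u = fun n => ∏ j, g j n) →
    ∃ v ∈ FSset N k T, ∀ n, |v n - u n| ≤ C * K * ε := by
  have hk0 : (0 : ℝ) < k := by exact_mod_cast (by omega : 0 < k)
  refine ⟨2 * k, by positivity, ?_⟩
  rintro N _ K - ε - hε1 S T hS hT hTε _ ⟨g, hg, rfl⟩
  have hS0 : (0 : ℝ) < S := by exact_mod_cast (by omega : 0 < S)
  have hTS : T ≤ S := by
    have : (T : ℝ) ≤ S := by nlinarith
    exact_mod_cast this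
  have hbound : (K : ℝ) * (2 * k * T / S) ≤ 2 * k * K * ε := by
    have : (T : ℝ) / S ≤ ε := (div_le_iff₀ hS0).2 hTε
    calc (K : ℝ) * (2 * k * T / S) = 2 * k * K * (T / S) := by ring
      _ ≤ 2 * k * K * ε := by gcongr
  have hbasic : ∀ b : Fin K → ZMod N → ℝ, (∀ j, b j ∈ FSbasic N k S) →
      MultilinearMap.mkPiAlgebra ℝ (Fin K) (ZMod N → ℝ) b ∈
        supNhd (FSset N k T) (2 * k * K * ε) := by
    intro b hb
    obtain ⟨v, hv, hvb⟩ := exists_mem_FSset_abs_sub_prod_le (by omega) hTS hb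
    exact ⟨v, hv, fun n => by simpa using (hvb n).trans hbound⟩
  obtain ⟨v, hv, hvg⟩ := MultilinearMap.map_mem_of_forall_mem_convexHull _
    ((convex_convexHull ℝ _).supNhd _) hbasic hg
  exact ⟨v, hv, fun n => by simpa using hvg n⟩
end

section
/- Suppose ν : G → ℝ satisfies the k-linear forms conditions with width S. Then for any u ∈ 𝓕_S, |⟨ν − 1, u⟩| = o(1), where ⟨f,g⟩ = E_{n∈G} f(n)g(n). In particular, applying the Cauchy–Schwarz inequality k times to eliminate the functions u_i yields |⟨ν−1, u⟩|^{2^k} ≤ E_{n∈G} E_{s^{(0)}, s^{(1)} ∈ [S]^k} ∏_{ω∈{0,1}^k} (ν(n + ψ(s^{(ω)})) − 1), and the right-hand side is o(1) by the linear forms conditions. -/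
/-!
For a basic `u`, the shift `n ↦ n + ψ(s)` turns `⟨ν - 1, u⟩` into a sum of
`(ν(n + ψ(s)) - 1) ∏ᵢ uᵢ(n, s)` in which `uᵢ` ignores `sᵢ`. Each Cauchy–Schwarz step pulls one
`uᵢ` (bounded by `1`) out of the `sᵢ`-sum and, by squaring that sum, doubles the coordinate
`sᵢ`; after `k` steps `|⟨ν - 1, u⟩|^{2^k}` is bounded by the normalised box sum
`E_n E_{s⁽⁰⁾,s⁽¹⁾} ∏_ω (ν(n + ψ(s^{(ω)})) - 1)`. Expanding that product gives `2^{2^k}` signed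
averages of products of shifts of `ν`, each `1 + O(δ)` by the linear forms conditions, and the
signs sum to zero, so the box sum is at most `2^{2^k} δ`. The sublevel sets of
`u ↦ |⟨ν - 1, u⟩|^{2^k}` are convex, so the bound passes from basic functions to `𝓕_S`.
-/

open Finset Fintype

universe u

section Tuples

variable {β M : Type*} [CommMonoid M] {k : ℕ}

@[to_additive]
theorem prod_piFinset_fin_succ (B : Finset β) (g : (Fin (k + 1) → β) → M) :
    ∏ s ∈ piFinset (fun _ => B), g s =
      ∏ t ∈ B, ∏ s ∈ piFinset (fun _ : Fin k => B), g (Fin.cons t s) := by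
  have h := filter_piFinset_eq_map_consEquiv (fun _ : Fin (k + 1) => B) (fun _ => True)
  simp only [filter_true] at h
  rw [h, prod_map, prod_product]
  rfl

theorem prod_fin_succ_bool (H : (Fin (k + 1) → Bool) → M) :
    ∏ ω, H ω = (∏ ω, H (Fin.cons true ω)) * ∏ ω, H (Fin.cons false ω) := by
  rw [← prod_equiv (Fin.consEquiv fun _ => Bool) (fun p => H (Fin.cons p.1 p.2)) H (fun _ => rfl),
    prod_prod_type, prod_bool]

end Tuples

theorem sq_sum_mul_le_card_mul_sum_sq {ι : Type*} (P : Finset ι) (a b : ι → ℝ)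
    (ha : ∀ p ∈ P, |a p| ≤ 1) : (∑ p ∈ P, a p * b p) ^ 2 ≤ #P * ∑ p ∈ P, b p ^ 2 :=
  calc (∑ p ∈ P, a p * b p) ^ 2 ≤ (∑ p ∈ P, a p ^ 2) * ∑ p ∈ P, b p ^ 2 :=
        sum_mul_sq_le_sq_mul_sq _ _ _
    _ ≤ #P * ∑ p ∈ P, b p ^ 2 := by
        gcongr
        simpa using sum_le_card_nsmul P (fun p => a p ^ 2) 1 fun p hp =>
            (sq_le_one_iff_abs_le_one _).2 (ha p hp)

section Box

variable {α β : Type u} {k : ℕ}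

/-- `∑_{a ∈ A} ‖f a‖^{2^k}` for the (unnormalised) box norm on `B^k`. -/
def boxSum (A : Finset α) (B : Finset β) (f : α → (Fin k → β) → ℝ) : ℝ :=
  ∑ a ∈ A, ∑ s₀ ∈ piFinset (fun _ => B), ∑ s₁ ∈ piFinset (fun _ => B),
    ∏ ω : Fin k → Bool, f a fun j => if ω j then s₁ j else s₀ j

def consMul (f : α → (Fin (k + 1) → β) → ℝ) : α × β × β → (Fin k → β) → ℝ :=
  fun x s => f x.1 (Fin.cons x.2.1 s) * f x.1 (Fin.cons x.2.2 s)

theorem boxSum_fin_zero (A : Finset α) (B : Finset β) (f : α → (Fin 0 → β) → ℝ) :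
    boxSum A B f = ∑ a ∈ A, f a default := by
  simp [boxSum, Subsingleton.elim _ (default : Fin 0 → β)]

theorem boxSum_succ (A : Finset α) (B : Finset β) (f : α → (Fin (k + 1) → β) → ℝ) :
    boxSum A B f = boxSum (A ×ˢ B ×ˢ B) B (consMul f) := by
  simp only [boxSum, sum_product, sum_piFinset_fin_succ]
  refine sum_congr rfl fun a _ => sum_congr rfl fun t₀ _ => ?_
  rw [sum_comm]
  refine sum_congr rfl fun t₁ _ => sum_congr rfl fun s₀ _ => sum_congr rfl fun s₁ _ => ?_
  rw [prod_fin_succ_bool, ← prod_mul_distrib]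
  refine prod_congr rfl fun ω _ => ?_
  rw [consMul, mul_comm]
  congr <;> funext j <;> cases j using Fin.cases <;> simp

theorem abs_consMul_le_one {f : α → (Fin (k + 1) → β) → ℝ} (hf : ∀ a s, |f a s| ≤ 1)
    (x : α × β × β) (s : Fin k → β) : |consMul f x s| ≤ 1 := by
  rw [consMul, abs_mul]
  exact mul_le_one₀ (hf _ _) (abs_nonneg _) (hf _ _)

theorem consMul_congr {f : α → (Fin (k + 1) → β) → ℝ} {i : Fin k}
    (hf : ∀ a s s', (∀ j, j ≠ i.succ → s j = s' j) → f a s = f a s')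
    (x : α × β × β) (s s' : Fin k → β) (h : ∀ j, j ≠ i → s j = s' j) :
    consMul f x s = consMul f x s' := by
  have hcons : ∀ t : β, ∀ j, j ≠ i.succ →
      Fin.cons (α := fun _ => β) t s j = Fin.cons (α := fun _ => β) t s' j := by
    intro t j hj
    cases j using Fin.cases with
    | zero => rfl
    | succ j => exact h j fun hji => hj (hji ▸ rfl)
  simp only [consMul, hf _ _ _ (hcons x.2.1), hf _ _ _ (hcons x.2.2)]

theorem sq_sum_mul_prod_le_consMul (A : Finset α) (B : Finset β) (f : α → (Fin (k + 1) → β) → ℝ)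
    (w : Fin (k + 1) → α → (Fin (k + 1) → β) → ℝ) (hw₀ : ∀ a s, |w 0 a s| ≤ 1)
    (hw₀_cons : ∀ a t t' s, w 0 a (Fin.cons t s) = w 0 a (Fin.cons t' s)) :
    (∑ a ∈ A, ∑ s ∈ piFinset (fun _ => B), f a s * ∏ i, w i a s) ^ 2 ≤
      #A * #B ^ k * ∑ x ∈ A ×ˢ B ×ˢ B, ∑ s ∈ piFinset (fun _ => B),
        consMul f x s * ∏ i : Fin k, consMul (w i.succ) x s := by
  rcases B.eq_empty_or_nonempty with rfl | ⟨b, -⟩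
  · simp
  -- `b` only serves to evaluate `w 0`, which ignores the first coordinate.
  set P := A ×ˢ piFinset (fun _ : Fin k => B)
  let g : α × (Fin k → β) → ℝ := fun p =>
    ∑ t ∈ B, f p.1 (Fin.cons t p.2) * ∏ i : Fin k, w i.succ p.1 (Fin.cons t p.2)
  have split_zero : ∑ a ∈ A, ∑ s ∈ piFinset (fun _ => B), f a s * ∏ i, w i a s =
      ∑ p ∈ P, w 0 p.1 (Fin.cons b p.2) * g p := by
    rw [sum_product]
    refine sum_congr rfl fun a _ => ?_
    rw [sum_piFinset_fin_succ, sum_comm]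
    refine sum_congr rfl fun s _ => ?_
    rw [mul_sum]
    refine sum_congr rfl fun t _ => ?_
    rw [Fin.prod_univ_succ, hw₀_cons a t b s]
    ring
  have expand_sq : ∑ p ∈ P, g p ^ 2 = ∑ x ∈ A ×ˢ B ×ˢ B, ∑ s ∈ piFinset (fun _ => B),
      consMul f x s * ∏ i : Fin k, consMul (w i.succ) x s := by
    simp only [P, g, sum_product, sq, Finset.sum_mul_sum]
    refine sum_congr rfl fun a _ => ?_
    rw [sum_comm]
    refine sum_congr rfl fun t₀ _ => ?_
    rw [sum_comm]
    refine sum_congr rfl fun t₁ _ => sum_congr rfl fun s _ => ?_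
    simp only [consMul, prod_mul_distrib]
    ring
  calc _ = (∑ p ∈ P, w 0 p.1 (Fin.cons b p.2) * g p) ^ 2 := by rw [split_zero]
    _ ≤ #P * ∑ p ∈ P, g p ^ 2 := sq_sum_mul_le_card_mul_sum_sq _ _ _ fun p _ => hw₀ _ _
    _ = _ := by rw [expand_sq, card_product, card_piFinset_const]; push_cast; rfl

theorem abs_sum_mul_prod_pow_le_boxSum (A : Finset α) (B : Finset β) (f : α → (Fin k → β) → ℝ)
    (w : Fin k → α → (Fin k → β) → ℝ) (hw : ∀ i a s, |w i a s| ≤ 1)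
    (hw_congr : ∀ i a s s', (∀ j, j ≠ i → s j = s' j) → w i a s = w i a s') :
    |∑ a ∈ A, ∑ s ∈ piFinset (fun _ => B), f a s * ∏ i, w i a s| ^ 2 ^ k * (#A * #B ^ (2 * k)) ≤
      (#A * #B ^ k) ^ 2 ^ k * |boxSum A B f| := by
  induction k generalizing α with
  | zero => simp [boxSum_fin_zero, mul_comm]
  | succ k ih =>
    have step := sq_sum_mul_prod_le_consMul A B f w (hw 0) fun a t t' s =>
      hw_congr 0 a _ _ fun j hj => by cases j using Fin.cases <;> simp_all
    have hih := ih (A ×ˢ B ×ˢ B) (consMul f) (fun i => consMul (w i.succ))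
      (fun i => abs_consMul_le_one (hw i.succ)) (fun i => consMul_congr (hw_congr i.succ))
    rw [← boxSum_succ, card_product, card_product] at hih
    set X := ∑ a ∈ A, ∑ s ∈ piFinset (fun _ => B), f a s * ∏ i, w i a s
    set T := ∑ x ∈ A ×ˢ B ×ˢ B, ∑ s ∈ piFinset (fun _ => B),
        consMul f x s * ∏ i : Fin k, consMul (w i.succ) x s
    push_cast at hih
    calc |X| ^ 2 ^ (k + 1) * (#A * #B ^ (2 * (k + 1)))
        = (X ^ 2) ^ 2 ^ k * (#A * #B ^ (2 * (k + 1))) := by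
          rw [pow_succ', pow_mul, sq_abs]
      _ ≤ (#A * #B ^ k * |T|) ^ 2 ^ k * (#A * #B ^ (2 * (k + 1))) := by
          gcongr
          exact step.trans (by gcongr; exact le_abs_self T)
      _ = (#A * #B ^ k) ^ 2 ^ k * (|T| ^ 2 ^ k * (#A * (#B * #B) * #B ^ (2 * k))) := by ring
      _ ≤ (#A * #B ^ k) ^ 2 ^ k * ((#A * (#B * #B) * #B ^ k) ^ 2 ^ k * |boxSum A B f|) :=
          mul_le_mul_of_nonneg_left hih (by positivity)
      _ = (#A * #B ^ (k + 1)) ^ 2 ^ (k + 1) * |boxSum A B f| := by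
          rw [pow_succ 2 k, pow_mul]; ring

end Box

theorem abs_sum_prod_sub_one_div_le {ι γ : Type*} [Fintype ι] [DecidableEq ι] [Nonempty ι]
    (Γ : Finset γ) (g : ι → γ → ℝ) (D δ : ℝ)
    (h : ∀ e : ι → Bool, |(∑ x ∈ Γ, ∏ i, if e i then g i x else 1) / D - 1| ≤ δ) :
    |(∑ x ∈ Γ, ∏ i, (g i x - 1)) / D| ≤ 2 ^ card ι * δ := by
  let σ : (ι → Bool) → ℝ := fun e => ∏ i, if e i then 1 else -1
  let Y : (ι → Bool) → ℝ := fun e => (∑ x ∈ Γ, ∏ i, if e i then g i x else 1) / D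
  have expand : ∀ x, ∏ i, (g i x - 1) = ∑ e : ι → Bool, σ e * ∏ i, if e i then g i x else 1 := by
    intro x
    calc ∏ i, (g i x - 1) = ∏ i, ∑ b : Bool, (if b then g i x else -1) := by
          simp [sub_eq_add_neg]
      _ = ∑ e : ι → Bool, ∏ i, (if e i then g i x else -1) := Fintype.prod_sum _
      _ = _ := by
          simp only [σ, ← prod_mul_distrib]
          refine sum_congr rfl fun e _ => prod_congr rfl fun i _ => ?_
          split_ifs <;> ring
  have sum_σ : ∑ e, σ e = 0 := by
    rw [← Fintype.prod_sum fun _ (b : Bool) => if b then (1 : ℝ) else -1]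
    simp
  have abs_σ : ∀ e, |σ e| = 1 := fun e => by
    simp only [σ, abs_prod]
    exact prod_eq_one fun i _ => by split_ifs <;> simp
  have hsum : (∑ x ∈ Γ, ∏ i, (g i x - 1)) / D = ∑ e, σ e * (Y e - 1) := by
    simp only [expand, Y, mul_sub, sum_sub_distrib, ← sum_mul, sum_σ, zero_mul, sub_zero]
    rw [sum_comm, sum_div]
    simp only [← mul_sum, mul_div_assoc]
  calc _ = |∑ e, σ e * (Y e - 1)| := by rw [hsum]
    _ ≤ ∑ e, |σ e * (Y e - 1)| := abs_sum_le_sum_abs _ _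
    _ ≤ ∑ _e : ι → Bool, δ := sum_le_sum fun e _ => by rw [abs_mul, abs_σ, one_mul]; exact h e
    _ = 2 ^ card ι * δ := by simp

theorem convex_setOf_abs_pow_le {E : Type*} [AddCommGroup E] [Module ℝ E] (L : E →ₗ[ℝ] ℝ)
    (n : ℕ) (c : ℝ) : Convex ℝ {u | |L u| ^ n ≤ c} := by
  refine Set.OrdConnected.convex (s := {x : ℝ | |x| ^ n ≤ c}) ⟨fun x hx y hy z hz => ?_⟩
    |>.linear_preimage L
  refine (pow_le_pow_left₀ (abs_nonneg z) (abs_le_max_abs_abs hz.1 hz.2) n).trans ?_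
  rcases max_choice |x| |y| with h | h <;> rw [h] <;> assumption

theorem abs_sum_sub_one_mul_pow_le_of_mem_FSbasic {N : ℕ} [NeZero N] {k S : ℕ} (hS : 0 < S)
    (ν : ZMod N → ℝ) (C : ℝ)
    (hbox : |(∑ n : ZMod N, ∑ s₀ ∈ sbox k S, ∑ s₁ ∈ sbox k S, ∏ ω : Fin k → Bool,
        (ν (n + ((psiK k fun j => if ω j then s₁ j else s₀ j : ℤ) : ZMod N)) - 1)) /
          ((N : ℝ) * (S : ℝ) ^ (2 * k))| ≤ C)
    {u : ZMod N → ℝ} (hu : u ∈ FSbasic N k S) :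
    |(∑ n, (ν n - 1) * u n) / (N : ℝ)| ^ 2 ^ k ≤ C := by
  obtain ⟨w, hw, hw_congr, hu⟩ := hu
  have hN : (0 : ℝ) < N := by exact_mod_cast NeZero.pos N
  have hS' : (0 : ℝ) < S := by exact_mod_cast hS
  let f : ZMod N → (Fin k → ℤ) → ℝ := fun m s => ν (m + ((psiK k s : ℤ) : ZMod N)) - 1
  let w' : Fin k → ZMod N → (Fin k → ℤ) → ℝ := fun i m s => w i m fun j => ((s j : ℤ) : ZMod N)
  set X := ∑ m, ∑ s ∈ sbox k S, f m s * ∏ i, w' i m s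
  have shift : ∑ n, (ν n - 1) * u n = X / (S : ℝ) ^ k := by
    simp only [hu, mul_div_assoc', ← sum_div, mul_sum, X]
    rw [sum_comm, sum_comm (s := univ)]
    refine congrArg (· / _) (sum_congr rfl fun s _ => ?_)
    exact (Fintype.sum_equiv (Equiv.addRight ((psiK k s : ℤ) : ZMod N)) _ _
      fun m => by simp [f, w']).symm
  have hcs := abs_sum_mul_prod_pow_le_boxSum univ (Icc 1 (S : ℤ)) f w' (fun _ _ _ => hw _ _ _)
    fun i m s s' h => hw_congr _ _ _ _ fun j hj => by rw [h j hj]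
  simp only [card_univ, ZMod.card, Int.card_Icc, add_sub_cancel_right, Int.toNat_natCast] at hcs
  have hD : (0 : ℝ) < N * (S : ℝ) ^ (2 * k) := by positivity
  rw [abs_div, abs_of_pos hD, div_le_iff₀ hD] at hbox
  have hX : |X| ^ 2 ^ k ≤ ((N : ℝ) * (S : ℝ) ^ k) ^ 2 ^ k * C := by
    refine le_of_mul_le_mul_right ?_ hD
    calc |X| ^ 2 ^ k * (N * (S : ℝ) ^ (2 * k))
        ≤ (N * (S : ℝ) ^ k) ^ 2 ^ k * |boxSum univ (Icc 1 (S : ℤ)) f| := hcs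
      _ ≤ (N * (S : ℝ) ^ k) ^ 2 ^ k * (C * (N * (S : ℝ) ^ (2 * k))) := by gcongr; exact hbox
      _ = _ := by ring
  have hSN : (0 : ℝ) < (S : ℝ) ^ k * N := by positivity
  rw [shift, div_div, abs_div, abs_of_pos hSN, div_pow, div_le_iff₀ (by positivity),
    mul_comm ((S : ℝ) ^ k), mul_comm C]
  exact hX

theorem stmt16_general (N : ℕ) [NeZero N] (k S : ℕ) (hS : 2 ≤ S)
    (ν : ZMod N → ℝ) (δ : ℝ)
    (hlf : ∀ e : (Fin k → Bool) → Bool,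
      |(∑ n : ZMod N, ∑ s0 ∈ sbox k S, ∑ s1 ∈ sbox k S,
          ∏ ω : Fin k → Bool,
            (if e ω then
              ν (n + ((psiK k (fun j => if ω j then s1 j else s0 j) : ℤ) : ZMod N))
            else 1))
        / ((N : ℝ) * (S : ℝ) ^ (2 * k)) - 1| ≤ δ) :
    ∀ u ∈ FSset N k S,
      |(∑ n : ZMod N, (ν n - 1) * u n) / (N : ℝ)| ^ (2 ^ k) ≤ 2 ^ (2 ^ k) * δ := by
  have hbox := abs_sum_prod_sub_one_div_le (univ ×ˢ sbox k S ×ˢ sbox k S)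
    (fun (ω : Fin k → Bool) (x : ZMod N × (Fin k → ℤ) × (Fin k → ℤ)) =>
      ν (x.1 + ((psiK k fun j => if ω j then x.2.2 j else x.2.1 j : ℤ) : ZMod N)))
    _ δ fun e => by simpa only [sum_product] using hlf e
  rw [card_fun, card_bool, Fintype.card_fin] at hbox
  simp only [sum_product] at hbox
  let L : (ZMod N → ℝ) →ₗ[ℝ] ℝ :=
    { toFun := fun u => (∑ n, (ν n - 1) * u n) / N
      map_add' := fun u v => by simp [mul_add, sum_add_distrib, add_div]
      map_smul' := fun c u => by simp [mul_left_comm, ← mul_sum, mul_div_assoc] }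
  exact fun u hu => convexHull_min
    (fun v hv => abs_sum_sub_one_mul_pow_le_of_mem_FSbasic (by omega) ν _ hbox hv)
    (convex_setOf_abs_pow_le L _ _) hu

/-- If ν satisfies the (second set of the) k-linear forms conditions with width S with
error δ, then for any u ∈ 𝓕_S, |⟨ν − 1, u⟩|^{2^k} ≤ 2^{2^k} δ, which is o(1); this
expresses the result of applying the Cauchy–Schwarz inequality k times:
|⟨ν−1, u⟩|^{2^k} ≤ E_{n} E_{s⁽⁰⁾,s⁽¹⁾∈[S]^k} ∏_{ω∈{0,1}^k} (ν(n + ψ(s^{(ω)})) − 1). -/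
theorem stmt16 (N : ℕ) [NeZero N] (k S : ℕ) (hk : 2 ≤ k) (hS : 2 ≤ S)
    (ν : ZMod N → ℝ) (hν : ∀ n, 0 ≤ ν n) (δ : ℝ) (hδ : 0 ≤ δ)
    (hlf : ∀ e : (Fin k → Bool) → Bool,
      |(∑ n : ZMod N, ∑ s0 ∈ sbox k S, ∑ s1 ∈ sbox k S,
          ∏ ω : Fin k → Bool,
            (if e ω then
              ν (n + ((psiK k (fun j => if ω j then s1 j else s0 j) : ℤ) : ZMod N))
            else 1))
        / ((N : ℝ) * (S : ℝ) ^ (2 * k)) - 1| ≤ δ) :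
    ∀ u ∈ FSset N k S,
      |(∑ n : ZMod N, (ν n - 1) * u n) / (N : ℝ)| ^ (2 ^ k) ≤ 2 ^ (2 ^ k) * δ :=
  stmt16_general N k S hS ν δ hlf
end
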